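/- arXiv:1703.09881 — 4 statements merged into one kernel-verified Lean document; each statement's English description precedes it below -/
import Mathlib

section
/- For integers p, q ≥ 1 and every integer k with 0 ≤ k ≤ min(p,q), the number γ_{k,p,q} of signed (p,q)-involutions whose underlying involution has exactly k two-cycles is given by γ_{k,p,q} = (p+q)! / ((p−k)! · (q−k)! · 2^k · k!). -/
/-- A signed `(p,q)`-involution: a pair `(π, ε)` where `π` is an involution of
`{1,…,p+q}` and `ε` assigns a sign (`true` = `+`, `false` = `-`) to each fixed
point of `π` (we normalize `ε` to be `true` on non-fixed points), such that the
number of fixed points with sign `+` minus the number of fixed points with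
sign `-` equals `p - q`. -/
def IsSignedInv (p q : ℕ) (x : Equiv.Perm (Fin (p + q)) × (Fin (p + q) → Bool)) : Prop :=
  x.1 * x.1 = 1 ∧ (∀ i, x.1 i ≠ i → x.2 i = true) ∧
    ((Finset.univ.filter fun i => x.1 i = i ∧ x.2 i = true).card : ℤ) -
      ((Finset.univ.filter fun i => x.1 i = i ∧ x.2 i = false).card : ℤ) = (p : ℤ) - (q : ℤ)

/-- `γ_{k,p,q}`: the number of signed `(p,q)`-involutions whose underlying
involution has exactly `k` two-cycles, i.e. exactly `2k` non-fixed points. -/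
noncomputable def gammaCount (k p q : ℕ) : ℕ :=
  Nat.card {x : Equiv.Perm (Fin (p + q)) × (Fin (p + q) → Bool) //
    IsSignedInv p q x ∧ (Finset.univ.filter fun i => x.1 i ≠ i).card = 2 * k}

/-! An involution with `k` two-cycles is a permutation of cycle type `2^k`, and the size of that
conjugacy class is `(p+q)! / ((p+q-2k)! 2^k k!)`. Given the involution, its
`p+q-2k` fixed points carry `+` and `-` signs whose numbers sum to `p+q-2k` and differ by `p-q`,
so exactly `q-k` of them carry `-`: there are `C(p+q-2k, q-k)` choices, and
`C(p+q-2k, q-k) (p-k)! (q-k)! = (p+q-2k)!`. -/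

open Equiv Finset Nat

namespace Equiv.Perm

variable {α : Type*} [Fintype α] [DecidableEq α]

theorem cycleType_eq_replicate_two_iff {σ : Perm α} {k : ℕ} :
    σ.cycleType = Multiset.replicate k 2 ↔ σ * σ = 1 ∧ #σ.support = 2 * k := by
  rw [← sum_cycleType, ← sq]
  constructor
  · intro h
    refine ⟨pow_prime_eq_one_iff.2 fun c hc => ?_, ?_⟩
    · rw [h] at hc; exact Multiset.eq_of_mem_replicate hc
    · rw [h, Multiset.sum_replicate, smul_eq_mul, mul_comm]
  · rintro ⟨hσ, hsum⟩
    have h := cycleType_of_pow_prime_eq_one hσ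
    rw [h, Multiset.sum_replicate, smul_eq_mul] at hsum
    rwa [show Multiset.card σ.cycleType = k by omega] at h

theorem card_cycleType_replicate_two_mul {k : ℕ} (hk : 2 * k ≤ Fintype.card α) :
    #{σ : Perm α | σ.cycleType = Multiset.replicate k 2} *
      ((Fintype.card α - 2 * k)! * (2 ^ k * k !)) = (Fintype.card α)! := by
  have h := card_of_cycleType_mul_eq α (Multiset.replicate k 2)
  have hfac :
      ∏ n ∈ (Multiset.replicate k 2).toFinset, ((Multiset.replicate k 2).count n)! = k ! := by
    rcases k.eq_zero_or_pos with rfl | hk0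
    · simp
    · simp [Multiset.toFinset_replicate, hk0.ne', Multiset.count_replicate_self]
  rw [hfac, Multiset.sum_replicate, Multiset.prod_replicate, smul_eq_mul, mul_comm k 2,
    if_pos] at h
  · rw [← h]; ring
  · exact ⟨hk, fun a ha => (Multiset.eq_of_mem_replicate ha).ge⟩

end Equiv.Perm

theorem Nat.card_subtype_fst_and_eq_mul {α β : Type*} [Fintype α] [Finite β]
    (P : α → Prop) (Q : α → β → Prop) {c : ℕ}
    (hc : ∀ a, P a → Nat.card {b // Q a b} = c) :
    Nat.card {x : α × β // P x.1 ∧ Q x.1 x.2} = Nat.card {a // P a} * c := by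
  classical
  let e : {x : α × β // P x.1 ∧ Q x.1 x.2} ≃ Σ a : {a // P a}, {b // Q a b} :=
    { toFun x := ⟨⟨x.1.1, x.2.1⟩, ⟨x.1.2, x.2.2⟩⟩
      invFun y := ⟨(y.1.1, y.2.1), y.1.2, y.2.2⟩
      left_inv _ := rfl
      right_inv _ := rfl }
  rw [Nat.card_congr e, Nat.card_sigma, sum_congr rfl fun (a : {a // P a}) _ => hc a a.2,
    sum_const, Finset.card_univ, smul_eq_mul, Nat.card_eq_fintype_card]

section Signs

variable {α : Type*} [Fintype α] [DecidableEq α]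

def falseSet (ε : α → Bool) : Finset α := {i | ε i = false}

def falseSetEquiv : (α → Bool) ≃ Finset α where
  toFun := falseSet
  invFun s i := decide (i ∉ s)
  left_inv ε := by funext i; simp [falseSet]
  right_inv s := by ext i; simp [falseSet]

theorem card_falseSet_mem (S : Finset (Finset α)) :
    Nat.card {ε : α → Bool // falseSet ε ∈ S} = #S := by
  rw [Nat.card_congr (falseSetEquiv.subtypeEquiv (p := (falseSet · ∈ S)) (q := (· ∈ S))
    fun _ => Iff.rfl), Nat.card_eq_fintype_card, Fintype.card_coe]

end Signs

theorem isSignedInv_iff {p q k : ℕ} {σ : Perm (Fin (p + q))} (hσ : σ * σ = 1)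
    (hsupp : #σ.support = 2 * k) (hkq : k ≤ q) (ε : Fin (p + q) → Bool) :
    IsSignedInv p q (σ, ε) ↔ falseSet ε ∈ σ.supportᶜ.powersetCard (q - k) := by
  have hfix : #{i | σ i = i ∧ ε i = true} + #{i | σ i = i ∧ ε i = false} + 2 * k = p + q :=
    calc _ = #(σ.supportᶜ.filter (ε · = true)) + #(σ.supportᶜ.filter (¬ε · = true)) +
          #σ.support := by
          rw [hsupp]; congr 3 <;> ext i <;> simp
      _ = p + q := by
          rw [card_filter_add_card_filter_not, card_compl_add_card, Fintype.card_fin]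
  have hsub : (∀ i, σ i ≠ i → ε i = true) ↔ falseSet ε ⊆ σ.supportᶜ := by
    simp [falseSet, Finset.subset_iff, not_imp_comm]
  have hneg (h : falseSet ε ⊆ σ.supportᶜ) :
      ({i | σ i = i ∧ ε i = false} : Finset (Fin (p + q))) = falseSet ε := by
    ext i
    simp only [falseSet, mem_filter, mem_univ, true_and]
    exact ⟨And.right, fun hi => ⟨by simpa using h (by simpa [falseSet] using hi), hi⟩⟩
  simp only [IsSignedInv, hσ, true_and, hsub, mem_powersetCard]
  refine and_congr_right fun h => ?_
  rw [hneg h] at hfix ⊢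
  omega

theorem gammaCount_eq_card_mul_choose {k p q : ℕ} (hkq : k ≤ q) :
    gammaCount k p q =
      #{σ : Perm (Fin (p + q)) | σ.cycleType = Multiset.replicate k 2} *
        (p + q - 2 * k).choose (q - k) := by
  have hcond (x : Perm (Fin (p + q)) × (Fin (p + q) → Bool)) :
      (IsSignedInv p q x ∧ #{i | x.1 i ≠ i} = 2 * k) ↔
        x.1.cycleType = Multiset.replicate k 2 ∧
          falseSet x.2 ∈ x.1.supportᶜ.powersetCard (q - k) := by
    obtain ⟨σ, ε⟩ := x
    rw [Perm.cycleType_eq_replicate_two_iff]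
    constructor
    · rintro ⟨hsigned, hsupp⟩
      exact ⟨⟨hsigned.1, hsupp⟩, (isSignedInv_iff hsigned.1 hsupp hkq ε).1 hsigned⟩
    · rintro ⟨⟨hσ, hsupp⟩, hε⟩
      exact ⟨(isSignedInv_iff hσ hsupp hkq ε).2 hε, hsupp⟩
  rw [gammaCount, Nat.card_congr (Equiv.subtypeEquivRight hcond),
    Nat.card_subtype_fst_and_eq_mul (α := Perm (Fin (p + q))) (β := Fin (p + q) → Bool)
      (fun σ => σ.cycleType = Multiset.replicate k 2)
      (fun σ ε => falseSet ε ∈ σ.supportᶜ.powersetCard (q - k))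
      (c := (p + q - 2 * k).choose (q - k)),
    Nat.card_eq_fintype_card, Fintype.card_subtype]
  intro σ hσ
  rw [card_falseSet_mem, card_powersetCard, card_compl, Fintype.card_fin,
    (Perm.cycleType_eq_replicate_two_iff.1 hσ).2]

theorem stmt0_general (p q k : ℕ) (hk : k ≤ min p q) :
    gammaCount k p q * ((p - k).factorial * (q - k).factorial * (2 ^ k * k.factorial)) =
      (p + q).factorial := by
  have hkp : k ≤ p := hk.trans (min_le_left p q)
  have hkq : k ≤ q := hk.trans (min_le_right p q)
  have hinv := Perm.card_cycleType_replicate_two_mul (α := Fin (p + q)) (k := k)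
    (by rw [Fintype.card_fin]; omega)
  have hsigns : (p + q - 2 * k).choose (q - k) * (q - k)! * (p - k)! = (p + q - 2 * k)! := by
    rw [← Nat.choose_mul_factorial_mul_factorial (show q - k ≤ p + q - 2 * k by omega),
      show p + q - 2 * k - (q - k) = p - k by omega]
  rw [Fintype.card_fin, ← hsigns] at hinv
  rw [gammaCount_eq_card_mul_choose hkq, ← hinv]
  ring

theorem stmt0 (p q k : ℕ) (hp : 1 ≤ p) (hq : 1 ≤ q) (hk : k ≤ min p q) :
    gammaCount k p q * ((p - k).factorial * (q - k).factorial * (2 ^ k * k.factorial)) =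
      (p + q).factorial :=
  stmt0_general p q k hk
end

section
/- For integers p, q ≥ 1 and every integer k ≥ 1, the numbers γ_{k,p,q} satisfy the recurrence γ_{k,p,q} = γ_{k,p−1,q} + γ_{k,p,q−1} + (p+q−1) · γ_{k−1,p−1,q−1}. -/
/-- `α_{p,q}`: the number of signed `(p,q)`-involutions. -/
noncomputable def alphaCount (p q : ℕ) : ℕ :=
  Nat.card {x : Equiv.Perm (Fin (p + q)) × (Fin (p + q) → Bool) // IsSignedInv p q x}

/-!
Classify a signed involution of `Option β` by what it does to `none`. If `none` is a fixed
point, deleting it leaves a signed involution of `β` with the same number of two-cycles and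
signature `p - q` lowered by one (sign `+`) or raised by one (sign `-`). Otherwise `none` lies in
a two-cycle with some `some a`, both carrying the normalized sign `+`; deleting the two-cycle
leaves a signed involution of `{i // i ≠ a}` with one two-cycle fewer and the same signature.
The counts depend on the underlying type only through its cardinality, and `a` ranges over the
`p + q - 1` points of `β`.
-/

open Equiv Finset

variable {α β : Type*}

theorem Finset.card_filter_option [Fintype α] (P : Option α → Prop) [DecidablePred P] :
    #{o | P o} = (if P none then 1 else 0) + #{i | P (some i)} := by
  simp only [card_filter, Fintype.sum_option]

theorem Finset.card_filter_eq_card_filter_ne_add [Fintype α] [DecidableEq α] (P : α → Prop)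
    [DecidablePred P] (a : α) :
    #{i | P i} = #{i | P i ∧ i ≠ a} + if P a then 1 else 0 := by
  rw [← Fintype.sum_ite_eq' a fun _ => if P a then 1 else 0]
  simp only [card_filter, ← sum_add_distrib]
  refine sum_congr rfl fun i _ => ?_
  by_cases h : i = a <;> simp [h]

theorem Finset.card_filter_equiv [Fintype α] [Fintype β] (e : α ≃ β) (P : β → Prop)
    [DecidablePred P] : #{i | P (e i)} = #{j | P j} := by
  simp only [← Fintype.card_subtype]
  exact Fintype.card_congr (e.subtypeEquiv fun _ => Iff.rfl)

theorem Equiv.Perm.mul_self_eq_one_iff_involutive (σ : Perm α) :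
    σ * σ = 1 ↔ Function.Involutive σ := by
  simp [Perm.ext_iff, Function.Involutive]

def IsSignedInvolution [Fintype α] [DecidableEq α] (k : ℕ) (t : ℤ)
    (x : Perm α × (α → Bool)) : Prop :=
  Function.Involutive x.1 ∧ (∀ i, x.1 i ≠ i → x.2 i = true) ∧
    (#{i | x.1 i = i ∧ x.2 i = true} : ℤ) - #{i | x.1 i = i ∧ x.2 i = false} = t ∧
    #{i | x.1 i ≠ i} = 2 * k

variable (α) in
noncomputable def signedInvolutionCount [Fintype α] [DecidableEq α] (k : ℕ) (t : ℤ) : ℕ :=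
  Nat.card {x : Perm α × (α → Bool) // IsSignedInvolution k t x}

section Transport

def Equiv.signedPermCongr (e : α ≃ β) : Perm α × (α → Bool) ≃ Perm β × (β → Bool) :=
  e.permCongr.prodCongr (e.arrowCongr (Equiv.refl Bool))

@[simp] theorem Equiv.signedPermCongr_fst_apply (e : α ≃ β) (x : Perm α × (α → Bool)) (i : α) :
    (e.signedPermCongr x).1 (e i) = e (x.1 i) := by
  simp [signedPermCongr]

@[simp] theorem Equiv.signedPermCongr_snd_apply (e : α ≃ β) (x : Perm α × (α → Bool)) (i : α) :
    (e.signedPermCongr x).2 (e i) = x.2 i := by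
  simp [signedPermCongr]

variable [Fintype α] [DecidableEq α] [Fintype β] [DecidableEq β]

theorem isSignedInvolution_signedPermCongr (e : α ≃ β) {k : ℕ} {t : ℤ}
    (x : Perm α × (α → Bool)) :
    IsSignedInvolution k t (e.signedPermCongr x) ↔ IsSignedInvolution k t x := by
  simp only [IsSignedInvolution, Function.Involutive, signedPermCongr, prodCongr_apply,
    Prod.map_fst, Prod.map_snd, ← e.forall_congr_right (q := fun j => _ = j),
    ← e.forall_congr_right (q := fun j => _ ≠ j → _), ← card_filter_equiv e, permCongr_apply,
    arrowCongr_apply, Function.comp_apply, symm_apply_apply, refl_apply,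
    EmbeddingLike.apply_eq_iff_eq, ne_eq]

theorem signedInvolutionCount_congr (e : α ≃ β) (k : ℕ) (t : ℤ) :
    signedInvolutionCount α k t = signedInvolutionCount β k t :=
  Nat.card_congr <| e.signedPermCongr.subtypeEquiv fun x =>
    (isSignedInvolution_signedPermCongr e x).symm

end Transport

section Option

variable [DecidableEq β]

/-- `((o, b), (σ, δ))` goes to the permutation sending `none` to `o` and otherwise acting by `σ`
(followed by the transposition of `none` and `o`), with sign `b` at `none` and `δ` elsewhere. -/
def optionSignedEquiv :
    (Option β × Bool) × (Perm β × (β → Bool)) ≃ Perm (Option β) × (Option β → Bool) :=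
  (prodProdProdComm _ _ _ _).trans
    (Perm.decomposeOption.symm.prodCongr (piOptionEquivProd (β := fun _ => Bool)).symm)

section Apply

variable (o : Option β) (b : Bool) (y : Perm β × (β → Bool)) (i : β)

@[simp] theorem optionSignedEquiv_fst_none : (optionSignedEquiv ((o, b), y)).1 none = o := by
  simp [optionSignedEquiv]

@[simp] theorem optionSignedEquiv_fst_some :
    (optionSignedEquiv ((o, b), y)).1 (some i) = swap none o (some (y.1 i)) := by
  simp [optionSignedEquiv]

@[simp] theorem optionSignedEquiv_snd_none : (optionSignedEquiv ((o, b), y)).2 none = b := rfl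

@[simp] theorem optionSignedEquiv_snd_some :
    (optionSignedEquiv ((o, b), y)).2 (some i) = y.2 i := rfl

end Apply

theorem optionSignedEquiv_some_fst_some {a : β} (b : Bool) {y : Perm β × (β → Bool)}
    (ha : y.1 a = a) (i : β) :
    (optionSignedEquiv ((some a, b), y)).1 (some i) = if i = a then none else some (y.1 i) := by
  by_cases hi : i = a
  · simp [hi, ha]
  · simp [swap_apply_def, hi, y.1.injective.ne_iff' ha]

theorem involutive_optionSignedEquiv_some_iff {a : β} (b : Bool) {y : Perm β × (β → Bool)}
    (ha : y.1 a = a) :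
    Function.Involutive (optionSignedEquiv ((some a, b), y)).1 ↔ Function.Involutive y.1 := by
  simp only [Function.Involutive, Option.forall, optionSignedEquiv_fst_none,
    optionSignedEquiv_some_fst_some b ha, if_pos, true_and]
  refine forall_congr' fun i => ?_
  by_cases hi : i = a
  · simp [hi, ha]
  · simp [hi, optionSignedEquiv_some_fst_some b ha, (y.1.injective.ne_iff' ha).mpr hi]

variable [Fintype β]

theorem isSignedInvolution_optionSignedEquiv_none {k : ℕ} {t : ℤ} (b : Bool)
    (y : Perm β × (β → Bool)) :
    IsSignedInvolution k t (optionSignedEquiv ((none, b), y)) ↔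
      IsSignedInvolution k (t - if b then 1 else -1) y := by
  simp only [IsSignedInvolution, Function.Involutive, Option.forall, card_filter_option,
    optionSignedEquiv_fst_none, optionSignedEquiv_fst_some, optionSignedEquiv_snd_none,
    optionSignedEquiv_snd_some, swap_self, refl_apply, Option.some_inj, ne_eq]
  cases b <;> simp <;> omega

theorem isSignedInvolution_optionSignedEquiv_some {k : ℕ} {t : ℤ} (a : β) (b : Bool)
    (y : Perm β × (β → Bool)) :
    IsSignedInvolution (k + 1) t (optionSignedEquiv ((some a, b), y)) ↔
      b = true ∧ y.1 a = a ∧ y.2 a = true ∧ IsSignedInvolution k (t + 1) y := by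
  by_cases ha : y.1 a ≠ a
  · have : ¬Function.Involutive (optionSignedEquiv ((some a, b), y)).1 := fun h => by
      simpa [swap_apply_def, ha] using h none
    simp [IsSignedInvolution, this, ha]
  rw [not_not] at ha
  have hnone := optionSignedEquiv_fst_none (some a) b y
  have hinv := involutive_optionSignedEquiv_some_iff b ha
  have hfix (i : β) :
      (optionSignedEquiv ((some a, b), y)).1 (some i) = some i ↔ y.1 i = i ∧ i ≠ a := by
    by_cases hi : i = a <;> simp [optionSignedEquiv_some_fst_some b ha, hi]
  have hsnd : (optionSignedEquiv ((some a, b), y)).2 = fun o => o.elim b y.2 := by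
    funext o; cases o <;> rfl
  generalize optionSignedEquiv ((some a, b), y) = x at *
  have hfixed (c : Bool) : #{o | x.1 o = o ∧ x.2 o = c} + (if y.2 a = c then 1 else 0) =
      #{i | y.1 i = i ∧ y.2 i = c} := by
    rw [card_filter_option, card_filter_eq_card_filter_ne_add (fun i => y.1 i = i ∧ y.2 i = c) a]
    simp [hnone, hfix, hsnd, ha, and_right_comm]
  have hmoved : #{o | x.1 o ≠ o} = #{i | y.1 i ≠ i} + 2 := by
    rw [card_filter_option, card_filter_eq_card_filter_ne_add (fun i => x.1 (some i) ≠ some i) a,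
      card_filter_eq_card_filter_ne_add (fun i => y.1 i ≠ i) a]
    have hmove (i : β) : (y.1 i = i → i = a) ∧ ¬i = a ↔ ¬y.1 i = i ∧ ¬i = a := by tauto
    simp [hnone, hfix, hmove, ha]
    omega
  have hsign : (∀ o, x.1 o ≠ o → x.2 o = true) ↔
      b = true ∧ y.2 a = true ∧ ∀ i, y.1 i ≠ i → y.2 i = true := by
    simp only [Option.forall, hnone, hsnd]
    grind
  have h₁ := hfixed true
  have h₂ := hfixed false
  simp only [IsSignedInvolution, hinv, hsign, hmoved, ha]
  by_cases hδ : y.2 a = true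
  · simp only [hδ, if_true, Bool.true_eq_false, if_false] at h₁ h₂
    constructor
    · rintro ⟨hσ, ⟨hb, -, hs⟩, ht, hk⟩
      exact ⟨hb, trivial, hδ, hσ, hs, by omega, by omega⟩
    · rintro ⟨hb, -, -, hσ, hs, ht, hk⟩
      exact ⟨hσ, ⟨hb, hδ, hs⟩, by omega, by omega⟩
  · simp [hδ]

theorem card_subtype_option_eq_sum (P : Perm (Option β) × (Option β → Bool) → Prop) :
    Nat.card {x // P x} = ∑ o, ∑ b, Nat.card {y // P (optionSignedEquiv ((o, b), y))} := by
  rw [← Nat.card_congr (optionSignedEquiv.subtypeEquivOfSubtype (p := P)),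
    Nat.card_congr (subtypeProdEquivSigmaSubtype fun a y => P (optionSignedEquiv (a, y))),
    Nat.card_sigma, Fintype.sum_prod_type]

end Option

variable [Fintype α] [DecidableEq α] [Fintype β] [DecidableEq β]

theorem card_isSignedInvolution_fixing (a : α) (b : Bool) (k : ℕ) (t : ℤ) :
    Nat.card {y : Perm α × (α → Bool) // y.1 a = a ∧ y.2 a = b ∧ IsSignedInvolution k t y} =
      signedInvolutionCount {i // i ≠ a} k (t - if b then 1 else -1) := by
  let e := optionSubtypeNe a
  have hcongr := Nat.card_congr <| e.signedPermCongr.subtypeEquiv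
    (p := fun z => z.1 none = none ∧ z.2 none = b ∧ IsSignedInvolution k t z)
    (q := fun y => y.1 (e none) = e none ∧ y.2 (e none) = b ∧ IsSignedInvolution k t y)
    fun z => by simp [isSignedInvolution_signedPermCongr]
  refine hcongr.symm.trans ?_
  rw [card_subtype_option_eq_sum]
  cases b <;> simp [isSignedInvolution_optionSignedEquiv_none, signedInvolutionCount]

theorem signedInvolutionCount_option_succ (k : ℕ) (t : ℤ) :
    signedInvolutionCount (Option β) (k + 1) t =
      signedInvolutionCount β (k + 1) (t - 1) + signedInvolutionCount β (k + 1) (t + 1) +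
        Fintype.card β * signedInvolutionCount (Fin (Fintype.card β - 1)) k t := by
  have hpair (a : β) : Nat.card {y : Perm β × (β → Bool) //
      y.1 a = a ∧ y.2 a = true ∧ IsSignedInvolution k (t + 1) y} =
        signedInvolutionCount (Fin (Fintype.card β - 1)) k t := by
    rw [card_isSignedInvolution_fixing, if_pos rfl, add_sub_cancel_right]
    exact signedInvolutionCount_congr (Fintype.equivFinOfCardEq (by simp)) k t
  rw [signedInvolutionCount, card_subtype_option_eq_sum]
  simp [Fintype.sum_option, isSignedInvolution_optionSignedEquiv_none,
    isSignedInvolution_optionSignedEquiv_some, hpair, signedInvolutionCount]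

theorem gammaCount_eq_signedInvolutionCount {k p q : ℕ} {t : ℤ} (hα : Fintype.card α = p + q)
    (ht : (p : ℤ) - q = t) : gammaCount k p q = signedInvolutionCount α k t := by
  rw [signedInvolutionCount_congr (Fintype.equivFinOfCardEq hα)]
  refine Nat.card_congr (Equiv.subtypeEquivRight fun x => ?_)
  simp only [IsSignedInv, IsSignedInvolution, Perm.mul_self_eq_one_iff_involutive, ht]
  tauto

theorem stmt1 (p q k : ℕ) (hp : 1 ≤ p) (hq : 1 ≤ q) (hk : 1 ≤ k) :
    gammaCount k p q =
      gammaCount k (p - 1) q + gammaCount k p (q - 1) +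
        (p + q - 1) * gammaCount (k - 1) (p - 1) (q - 1) := by
  obtain ⟨p, rfl⟩ : ∃ p', p = p' + 1 := ⟨p - 1, by omega⟩
  obtain ⟨q, rfl⟩ : ∃ q', q = q' + 1 := ⟨q - 1, by omega⟩
  obtain ⟨k, rfl⟩ : ∃ k', k = k' + 1 := ⟨k - 1, by omega⟩
  have h₀ : gammaCount (k + 1) (p + 1) (q + 1) =
      signedInvolutionCount (Option (Fin (p + q + 1))) (k + 1) (p - q) :=
    gammaCount_eq_signedInvolutionCount (by simp; omega) (by push_cast; ring)
  have h₁ : gammaCount (k + 1) p (q + 1) =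
      signedInvolutionCount (Fin (p + q + 1)) (k + 1) (p - q - 1) :=
    gammaCount_eq_signedInvolutionCount (by simp; omega) (by push_cast; ring)
  have h₂ : gammaCount (k + 1) (p + 1) q =
      signedInvolutionCount (Fin (p + q + 1)) (k + 1) (p - q + 1) :=
    gammaCount_eq_signedInvolutionCount (by simp; omega) (by push_cast; ring)
  have h₃ : gammaCount k p q = signedInvolutionCount (Fin (p + q)) k (p - q) :=
    gammaCount_eq_signedInvolutionCount (by simp) rfl
  rw [Nat.add_sub_cancel, Nat.add_sub_cancel, Nat.add_sub_cancel,
    show p + 1 + (q + 1) - 1 = p + q + 1 by omega, h₀, h₁, h₂, h₃,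
    signedInvolutionCount_option_succ, Fintype.card_fin, Nat.add_sub_cancel]
end

section
/- Let α_{p,q} denote the number of signed (p,q)-involutions. Then α_{p,0} = α_{0,q} = 1 for all p, q ≥ 0, and for all integers p, q ≥ 1 the recurrence α_{p,q} = α_{p−1,q} + α_{p,q−1} + (p+q−1) · α_{p−1,q−1} holds. -/
open Equiv Finset

namespace SIAux

abbrev St (n : ℕ) := Equiv.Perm (Fin n) × (Fin n → Bool)

def SInv (n : ℕ) (d : ℤ) (x : St n) : Prop :=
  x.1 * x.1 = 1 ∧ (∀ i, x.1 i ≠ i → x.2 i = true) ∧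
    ((Finset.univ.filter fun i => x.1 i = i ∧ x.2 i = true).card : ℤ) -
      ((Finset.univ.filter fun i => x.1 i = i ∧ x.2 i = false).card : ℤ) = d

noncomputable def AA (n : ℕ) (d : ℤ) : ℕ := Nat.card {x : St n // SInv n d x}

def ext0 {n : ℕ} (σ : Perm (Fin n)) : Perm (Fin (n + 1)) :=
  Equiv.Perm.decomposeFin.symm (0, σ)

@[simp] lemma ext0_zero {n : ℕ} (σ : Perm (Fin n)) : ext0 σ 0 = 0 := by
  simp [ext0]

@[simp] lemma ext0_succ {n : ℕ} (σ : Perm (Fin n)) (i : Fin n) :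
    ext0 σ i.succ = (σ i).succ := by
  simp [ext0]

lemma decomposeFin_fst {n : ℕ} (π : Perm (Fin (n + 1))) :
    (Equiv.Perm.decomposeFin π).1 = π 0 := by
  conv_rhs => rw [← Equiv.Perm.decomposeFin.symm_apply_apply π]
  rw [Equiv.Perm.decomposeFin_symm_apply_zero]

lemma eq_ext0 {n : ℕ} (π : Perm (Fin (n + 1))) (h : π 0 = 0) :
    π = ext0 (Equiv.Perm.decomposeFin π).2 := by
  conv_lhs => rw [← Equiv.Perm.decomposeFin.symm_apply_apply π]
  rw [ext0]
  congr 1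
  ext
  · rw [decomposeFin_fst, h]
  · rfl

lemma ext0_mul {n : ℕ} (σ τ : Perm (Fin n)) : ext0 σ * ext0 τ = ext0 (σ * τ) := by
  ext i
  induction i using Fin.cases <;> simp [Equiv.Perm.mul_apply]

lemma ext0_one {n : ℕ} : (ext0 (1 : Perm (Fin n))) = 1 := by
  ext i
  induction i using Fin.cases <;> simp

lemma ext0_inj {n : ℕ} {σ τ : Perm (Fin n)} (h : ext0 σ = ext0 τ) : σ = τ := by
  have := Equiv.Perm.decomposeFin.symm.injective h
  simpa using this

lemma ext0_invol_iff {n : ℕ} (σ : Perm (Fin n)) : ext0 σ * ext0 σ = 1 ↔ σ * σ = 1 := by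
  rw [ext0_mul, ← ext0_one]
  exact ⟨fun h => ext0_inj h, fun h => by rw [h]⟩

lemma count_ext0 {n : ℕ} (σ : Perm (Fin n)) (ε : Fin n → Bool) (b c : Bool) :
    (Finset.univ.filter fun i => ext0 σ i = i ∧ (Fin.cons b ε : Fin (n+1) → Bool) i = c).card
      = (if b = c then 1 else 0) + (Finset.univ.filter fun i => σ i = i ∧ ε i = c).card := by
  rw [Fin.card_filter_univ_succ']
  congr 1
  · simp
  · exact congrArg Finset.card (Finset.filter_congr (fun x _ => by simp [Fin.succ_inj]))

lemma sInv_ext0 {n : ℕ} (d : ℤ) (b : Bool) (y : St n) :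
    SInv (n + 1) d (ext0 y.1, (Fin.cons b y.2 : Fin (n+1) → Bool)) ↔
      SInv n (if b then d - 1 else d + 1) y := by
  obtain ⟨σ, ε⟩ := y
  simp only [SInv]
  refine and_congr (ext0_invol_iff σ) (and_congr ?_ ?_)
  · constructor
    · intro h i hi
      have := h i.succ (by simpa [Fin.succ_inj] using hi)
      simpa using this
    · intro h i
      induction i using Fin.cases with
      | zero => simp
      | succ j => intro hj; simpa using h j (by simpa [Fin.succ_inj] using hj)
  · rw [count_ext0, count_ext0]
    cases b <;> · simp; constructor <;> intro <;> omega


def fixEquiv (n : ℕ) (d : ℤ) (b : Bool) :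
    {x : St (n + 1) // SInv (n + 1) d x ∧ x.1 0 = 0 ∧ x.2 0 = b}
      ≃ {y : St n // SInv n (if b then d - 1 else d + 1) y} where
  toFun x := ⟨((Equiv.Perm.decomposeFin x.1.1).2, x.1.2 ∘ Fin.succ), by
    have hσ : ext0 (Equiv.Perm.decomposeFin x.1.1).2 = x.1.1 := (eq_ext0 _ x.2.2.1).symm
    have hε : (Fin.cons b (x.1.2 ∘ Fin.succ) : Fin (n+1) → Bool) = x.1.2 := by
      funext i
      induction i using Fin.cases <;> simp [x.2.2.2]
    exact (sInv_ext0 d b _).1 (by rw [hσ, hε]; exact x.2.1)⟩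
  invFun y := ⟨(ext0 y.1.1, (Fin.cons b y.1.2 : Fin (n+1) → Bool)),
    ⟨(sInv_ext0 d b y.1).2 y.2, by simp, by simp⟩⟩
  left_inv x := by
    apply Subtype.ext
    apply Prod.ext
    · exact (eq_ext0 _ x.2.2.1).symm
    · funext i
      induction i using Fin.cases <;> simp [x.2.2.2]
  right_inv y := by
    apply Subtype.ext
    apply Prod.ext
    · simp [ext0]
    · funext i
      simp


lemma fin_one_ne_zero (n : ℕ) : (1 : Fin (n + 2)) ≠ 0 := by
  rw [← Fin.succ_zero_eq_one]
  exact Fin.succ_ne_zero 0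

/-- extend an involution of `Fin n` to `Fin (n+2)` with the 2-cycle `(0 1)` added. -/
def P2 {n : ℕ} (τ : Perm (Fin n)) : Perm (Fin (n + 2)) :=
  Equiv.Perm.decomposeFin.symm (1, ext0 τ)

@[simp] lemma P2_zero {n : ℕ} (τ : Perm (Fin n)) : P2 τ 0 = 1 := by simp [P2]

@[simp] lemma P2_one {n : ℕ} (τ : Perm (Fin n)) : P2 τ 1 = 0 := by
  have : (1 : Fin (n + 2)) = (0 : Fin (n + 1)).succ := (Fin.succ_zero_eq_one).symm
  rw [P2, this, Equiv.Perm.decomposeFin_symm_apply_succ]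
  simp [Fin.succ_zero_eq_one]

@[simp] lemma P2_succ_succ {n : ℕ} (τ : Perm (Fin n)) (i : Fin n) :
    P2 τ i.succ.succ = (τ i).succ.succ := by
  rw [P2, Equiv.Perm.decomposeFin_symm_apply_succ]
  rw [ext0_succ]
  apply Equiv.swap_apply_of_ne_of_ne
  · exact Fin.succ_ne_zero _
  · rw [← Fin.succ_zero_eq_one]
    intro h
    exact Fin.succ_ne_zero _ (Fin.succ_injective _ h)

lemma P2_invol_iff {n : ℕ} (τ : Perm (Fin n)) : P2 τ * P2 τ = 1 ↔ τ * τ = 1 := by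
  constructor
  · intro h
    ext i
    have := congrArg (fun π : Perm (Fin (n+2)) => π i.succ.succ) h
    simp only [Equiv.Perm.mul_apply, P2_succ_succ, Equiv.Perm.one_apply] at this
    have h2 : τ (τ i) = i := Fin.succ_injective _ (Fin.succ_injective _ this)
    simp [Equiv.Perm.mul_apply, h2]
  · intro h
    ext i
    induction i using Fin.cases with
    | zero => simp [Equiv.Perm.mul_apply]
    | succ j =>
      induction j using Fin.cases with
      | zero => simp [Equiv.Perm.mul_apply, Fin.succ_zero_eq_one]
      | succ k =>
        have : τ (τ k) = k := by
          have := congrArg (fun π : Perm (Fin n) => π k) h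
          simpa using this
        simp [Equiv.Perm.mul_apply, this]

lemma count_P2 {n : ℕ} (τ : Perm (Fin n)) (ε : Fin n → Bool) (c : Bool) :
    (Finset.univ.filter fun i => P2 τ i = i ∧
        (Fin.cons true (Fin.cons true ε : Fin (n+1) → Bool) : Fin (n+2) → Bool) i = c).card
      = (Finset.univ.filter fun i => τ i = i ∧ ε i = c).card := by
  rw [Fin.card_filter_univ_succ']
  have h0 : ¬ ((1 : Fin (n+2)) = 0) := fin_one_ne_zero n
  simp only [P2_zero, h0, false_and, if_false, zero_add]
  rw [Fin.card_filter_univ_succ']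
  have h1 : P2 τ (0 : Fin (n+1)).succ = 0 := by rw [Fin.succ_zero_eq_one]; exact P2_one τ
  have h1' : ¬ (P2 τ (0 : Fin (n+1)).succ = (0 : Fin (n+1)).succ) := by
    rw [h1, Fin.succ_zero_eq_one]; exact Ne.symm (fin_one_ne_zero n)
  simp only [h1', false_and, if_false, zero_add]
  exact congrArg Finset.card (Finset.filter_congr (fun x _ => by simp [Fin.succ_inj]))

lemma sInv_P2 {n : ℕ} (d : ℤ) (y : St n) :
    SInv (n + 2) d (P2 y.1,
      (Fin.cons true (Fin.cons true y.2 : Fin (n+1) → Bool) : Fin (n+2) → Bool)) ↔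
      SInv n d y := by
  obtain ⟨τ, ε⟩ := y
  simp only [SInv]
  refine and_congr (P2_invol_iff τ) (and_congr ?_ ?_)
  · constructor
    · intro h i hi
      have := h i.succ.succ (by simpa [Fin.succ_inj] using hi)
      simpa using this
    · intro h i
      induction i using Fin.cases with
      | zero => simp
      | succ j =>
        induction j using Fin.cases with
        | zero => simp [Fin.succ_zero_eq_one]
        | succ k =>
          intro hk
          simpa using h k (by simpa [Fin.succ_inj] using hk)
  · rw [count_P2, count_P2]

lemma apply_one_eq_zero {n : ℕ} (π : Perm (Fin (n + 2))) (hinv : π * π = 1)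
    (h0 : π 0 = 1) : π 1 = 0 := by
  have := congrArg (fun ρ : Perm (Fin (n+2)) => ρ 0) hinv
  simp only [Equiv.Perm.mul_apply, Equiv.Perm.one_apply, h0] at this
  exact this

lemma eq_P2 {n : ℕ} (π : Perm (Fin (n + 2))) (hinv : π * π = 1) (h0 : π 0 = 1) :
    π = P2 ((Equiv.Perm.decomposeFin (Equiv.Perm.decomposeFin π).2).2) := by
  set σ := (Equiv.Perm.decomposeFin π).2 with hσdef
  have hπ : π = Equiv.Perm.decomposeFin.symm (1, σ) := by
    conv_lhs => rw [← Equiv.Perm.decomposeFin.symm_apply_apply π]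
    congr 1
    ext
    · rw [decomposeFin_fst, h0]
    · rfl
  have hσ0 : σ 0 = 0 := by
    have h1 : π 1 = 0 := apply_one_eq_zero π hinv h0
    have : π (0 : Fin (n+1)).succ = Equiv.swap 0 1 ((σ 0).succ) := by
      conv_lhs => rw [hπ]
      rw [Equiv.Perm.decomposeFin_symm_apply_succ]
    rw [Fin.succ_zero_eq_one, h1] at this
    have h2 : ((σ 0).succ) = Equiv.swap (0 : Fin (n+2)) 1 0 := by
      rw [← Equiv.swap_apply_self (0 : Fin (n+2)) 1 ((σ 0).succ), ← this]
    rw [Equiv.swap_apply_left] at h2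
    have := Fin.succ_injective _ (h2.trans (Fin.succ_zero_eq_one).symm)
    exact this
  have hσ : σ = ext0 (Equiv.Perm.decomposeFin σ).2 := eq_ext0 σ hσ0
  rw [P2, ← hσ, ← hπ]

lemma eq_consons {n : ℕ} (x : St (n + 2)) (hnorm : ∀ i, x.1 i ≠ i → x.2 i = true)
    (h0 : x.1 0 = 1) (h1 : x.1 1 = 0) :
    x.2 = (Fin.cons true (Fin.cons true (x.2 ∘ Fin.succ ∘ Fin.succ) : Fin (n+1) → Bool)
      : Fin (n+2) → Bool) := by
  funext i
  induction i using Fin.cases with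
  | zero =>
    simp only [Fin.cons_zero]
    exact hnorm 0 (by rw [h0]; exact fin_one_ne_zero n)
  | succ j =>
    induction j using Fin.cases with
    | zero =>
      simp only [Fin.succ_zero_eq_one, Fin.cons_succ, Fin.cons_zero]
      exact hnorm 1 (by rw [h1]; exact Ne.symm (fin_one_ne_zero n))
    | succ k => simp

def twoEquiv (n : ℕ) (d : ℤ) :
    {x : St (n + 2) // SInv (n + 2) d x ∧ x.1 0 = 1} ≃ {y : St n // SInv n d y} where
  toFun x := ⟨((Equiv.Perm.decomposeFin (Equiv.Perm.decomposeFin x.1.1).2).2,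
      x.1.2 ∘ Fin.succ ∘ Fin.succ), by
    have hπ := eq_P2 x.1.1 x.2.1.1 x.2.2
    have hε := eq_consons x.1 x.2.1.2.1 x.2.2 (apply_one_eq_zero _ x.2.1.1 x.2.2)
    exact (sInv_P2 d _).1 (by rw [← hπ, ← hε]; exact x.2.1)⟩
  invFun y := ⟨(P2 y.1.1,
      (Fin.cons true (Fin.cons true y.1.2 : Fin (n+1) → Bool) : Fin (n+2) → Bool)),
    ⟨(sInv_P2 d y.1).2 y.2, P2_zero _⟩⟩
  left_inv x := by
    apply Subtype.ext
    apply Prod.ext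
    · exact (eq_P2 x.1.1 x.2.1.1 x.2.2).symm
    · exact (eq_consons x.1 x.2.1.2.1 x.2.2 (apply_one_eq_zero _ x.2.1.1 x.2.2)).symm
  right_inv y := by
    apply Subtype.ext
    apply Prod.ext
    · simp [P2, ext0]
    · funext i
      simp


lemma card_filter_comp {m : ℕ} (c : Perm (Fin m)) (P : Fin m → Prop) [DecidablePred P] :
    (Finset.univ.filter fun i => P (c i)).card = (Finset.univ.filter P).card := by
  rw [← Fintype.card_subtype, ← Fintype.card_subtype]
  exact Fintype.card_congr (c.subtypeEquiv fun a => Iff.rfl)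

def conjPair {m : ℕ} (c : Perm (Fin m)) (hc : ∀ i, c (c i) = i) : St m ≃ St m where
  toFun x := (c * x.1 * c, x.2 ∘ c)
  invFun x := (c * x.1 * c, x.2 ∘ c)
  left_inv x := by
    apply Prod.ext
    · ext i; simp [Equiv.Perm.mul_apply, hc]
    · funext i; simp [Function.comp, hc]
  right_inv x := by
    apply Prod.ext
    · ext i; simp [Equiv.Perm.mul_apply, hc]
    · funext i; simp [Function.comp, hc]

lemma sInv_conjPair {m : ℕ} {d : ℤ} (c : Perm (Fin m)) (hc : ∀ i, c (c i) = i)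
    (x : St m) (h : SInv m d x) : SInv m d (conjPair c hc x) := by
  obtain ⟨h1, h2, h3⟩ := h
  have hxx : ∀ i, x.1 (x.1 i) = i := fun i => by
    have := congrArg (fun π : Perm (Fin m) => π i) h1
    simpa [Equiv.Perm.mul_apply] using this
  have key : ∀ i : Fin m, (c * x.1 * c) i = i ↔ x.1 (c i) = c i := by
    intro i
    simp only [Equiv.Perm.mul_apply]
    constructor
    · intro hh
      have := congrArg c hh
      rwa [hc] at this
    · intro hh; rw [hh, hc]
  refine ⟨?_, ?_, ?_⟩
  · ext i
    simp [conjPair, Equiv.Perm.mul_apply, hc, hxx]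
  · intro i hi
    have : x.1 (c i) ≠ c i := by
      intro hh
      exact hi ((key i).2 hh)
    exact h2 (c i) this
  · show ((Finset.univ.filter fun i => (c * x.1 * c) i = i ∧ x.2 (c i) = true).card : ℤ)
      - ((Finset.univ.filter fun i => (c * x.1 * c) i = i ∧ x.2 (c i) = false).card : ℤ) = d
    have e1 : ∀ cc : Bool, (Finset.univ.filter fun i => (c * x.1 * c) i = i ∧ x.2 (c i) = cc).card
        = (Finset.univ.filter fun i => x.1 i = i ∧ x.2 i = cc).card := by
      intro cc
      rw [Finset.filter_congr (fun i _ => by rw [key i] : ∀ i ∈ Finset.univ,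
        ((c * x.1 * c) i = i ∧ x.2 (c i) = cc) ↔ (x.1 (c i) = c i ∧ x.2 (c i) = cc))]
      exact card_filter_comp c (fun j => x.1 j = j ∧ x.2 j = cc)
    rw [e1, e1]
    exact h3

def conjCondEquiv (n : ℕ) (d : ℤ) (j : Fin (n + 1)) :
    {x : St (n + 2) // SInv (n + 2) d x ∧ x.1 0 = j.succ}
      ≃ {x : St (n + 2) // SInv (n + 2) d x ∧ x.1 0 = 1} := by
  set c : Perm (Fin (n + 2)) := Equiv.swap 1 j.succ with hcdef
  have hc : ∀ i, c (c i) = i := fun i => Equiv.swap_apply_self _ _ i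
  have hc0 : c 0 = 0 := Equiv.swap_apply_of_ne_of_ne
    (Ne.symm (fin_one_ne_zero n)) (Ne.symm (Fin.succ_ne_zero j))
  refine Equiv.subtypeEquiv (conjPair c hc) (fun x => ?_)
  have happly : (conjPair c hc x).1 0 = c (x.1 0) := by
    show (c * x.1 * c) 0 = c (x.1 0)
    rw [Equiv.Perm.mul_apply, Equiv.Perm.mul_apply, hc0]
  constructor
  · rintro ⟨hs, h0⟩
    refine ⟨sInv_conjPair c hc x hs, ?_⟩
    rw [happly, h0, hcdef, Equiv.swap_apply_right]
  · rintro ⟨hs, h0⟩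
    have hx : x = conjPair c hc (conjPair c hc x) := ((conjPair c hc).left_inv x).symm
    refine ⟨by rw [hx]; exact sInv_conjPair c hc _ hs, ?_⟩
    rw [happly] at h0
    have : c (c (x.1 0)) = c 1 := by rw [h0]
    rw [hc] at this
    rw [this, hcdef, Equiv.swap_apply_left]

def fiberEquiv (n : ℕ) (d : ℤ) (j : Fin (n + 1)) :
    {z : {x : St (n + 2) // SInv (n + 2) d x ∧ x.1 0 ≠ 0} // (z.1.1 0).pred z.2.2 = j}
      ≃ {x : St (n + 2) // SInv (n + 2) d x ∧ x.1 0 = j.succ} where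
  toFun z := ⟨z.1.1, z.1.2.1, ((congrArg Fin.succ z.2.symm).trans (Fin.succ_pred _ _)).symm⟩
  invFun w := ⟨⟨w.1, w.2.1, by rw [w.2.2]; exact Fin.succ_ne_zero _⟩, by
    apply Fin.succ_injective
    rw [Fin.succ_pred]
    exact w.2.2⟩
  left_inv z := by apply Subtype.ext; apply Subtype.ext; rfl
  right_inv w := by apply Subtype.ext; rfl

def nonfixEquiv (n : ℕ) (d : ℤ) :
    {x : St (n + 2) // SInv (n + 2) d x ∧ x.1 0 ≠ 0}
      ≃ Fin (n + 1) × {y : St n // SInv n d y} :=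
  (((Equiv.sigmaFiberEquiv
      (fun z : {x : St (n + 2) // SInv (n + 2) d x ∧ x.1 0 ≠ 0} =>
        (z.1.1 0).pred z.2.2)).symm.trans
    (Equiv.sigmaCongrRight fun j =>
      ((fiberEquiv n d j).trans (conjCondEquiv n d j)).trans (twoEquiv n d))).trans
    (Equiv.sigmaEquivProd (Fin (n + 1)) {y : St n // SInv n d y}))


noncomputable def splitEquiv {α : Type*} (P Q : α → Prop) :
    {x // P x} ≃ {x // P x ∧ Q x} ⊕ {x // P x ∧ ¬ Q x} := by
  classical
  exact (Equiv.sumCompl (fun y : {x // P x} => Q y.1)).symm.trans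
    (Equiv.sumCongr (Equiv.subtypeSubtypeEquivSubtypeInter P Q)
      (Equiv.subtypeSubtypeEquivSubtypeInter P (fun x => ¬ Q x)))

noncomputable def recEquiv (n : ℕ) (d : ℤ) :
    {x : St (n + 2) // SInv (n + 2) d x}
      ≃ ({y : St (n + 1) // SInv (n + 1) (d - 1) y}
          ⊕ {y : St (n + 1) // SInv (n + 1) (d + 1) y})
        ⊕ (Fin (n + 1) × {y : St n // SInv n d y}) :=
  ((splitEquiv (SInv (n + 2) d) (fun x => x.1 0 = 0)).trans
    (Equiv.sumCongr
      (((splitEquiv (fun x : St (n + 2) => SInv (n + 2) d x ∧ x.1 0 = 0)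
          (fun x => x.2 0 = true)).trans
        (Equiv.sumCongr
          (((Equiv.subtypeEquivRight (fun x => by tauto)).trans
            (fixEquiv (n + 1) d true)) :
              {x : St (n + 2) // (SInv (n + 2) d x ∧ x.1 0 = 0) ∧ x.2 0 = true}
                ≃ {y : St (n + 1) // SInv (n + 1) (d - 1) y})
          (((Equiv.subtypeEquivRight (fun x => by
              simp only [Bool.not_eq_true, and_assoc])).trans
            (fixEquiv (n + 1) d false)) :
              {x : St (n + 2) // (SInv (n + 2) d x ∧ x.1 0 = 0) ∧ ¬ (x.2 0 = true)}
                ≃ {y : St (n + 1) // SInv (n + 1) (d + 1) y}))))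
      (nonfixEquiv n d)))

lemma AA_rec (n : ℕ) (d : ℤ) :
    AA (n + 2) d = AA (n + 1) (d - 1) + AA (n + 1) (d + 1) + (n + 1) * AA n d := by
  have h := Nat.card_congr (recEquiv n d)
  rw [AA, h, Nat.card_sum, Nat.card_sum, Nat.card_prod,
    Nat.card_eq_fintype_card (α := Fin (n + 1)), Fintype.card_fin]
  rfl

lemma AA_top (n : ℕ) : AA n (n : ℤ) = 1 := by
  have h : ∀ x : St n, SInv n (n : ℤ) x ↔ x = (1, fun _ => true) := by
    intro x
    constructor
    · rintro ⟨h1, h2, h3⟩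
      have ha : (Finset.univ.filter fun i => x.1 i = i ∧ x.2 i = true).card ≤ n := by
        calc _ ≤ (Finset.univ : Finset (Fin n)).card := Finset.card_le_univ _
        _ = n := Finset.card_fin n
      have heq : (Finset.univ.filter fun i => x.1 i = i ∧ x.2 i = true).card = n := by omega
      have huniv : (Finset.univ.filter fun i => x.1 i = i ∧ x.2 i = true) = Finset.univ :=
        Finset.eq_univ_of_card _ (heq.trans (Fintype.card_fin n).symm)
      have hall : ∀ i : Fin n, x.1 i = i ∧ x.2 i = true := by
        intro i
        have : i ∈ (Finset.univ.filter fun i => x.1 i = i ∧ x.2 i = true) := by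
          rw [huniv]; exact Finset.mem_univ i
        simpa using this
      apply Prod.ext
      · apply Equiv.ext; intro i; simpa using (hall i).1
      · funext i; simpa using (hall i).2
    · rintro rfl
      refine ⟨mul_one 1, fun i hi => absurd rfl hi, ?_⟩
      simp [Finset.card_fin]
  haveI : Unique {x : St n // x = ((1 : Perm (Fin n)), fun _ => true)} :=
    ⟨⟨⟨_, rfl⟩⟩, fun y => Subtype.ext y.2⟩
  rw [AA, Nat.card_congr (Equiv.subtypeEquivRight h), Nat.card_unique]

lemma AA_bot (n : ℕ) : AA n (-(n : ℤ)) = 1 := by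
  have h : ∀ x : St n, SInv n (-(n : ℤ)) x ↔ x = (1, fun _ => false) := by
    intro x
    constructor
    · rintro ⟨h1, h2, h3⟩
      have ha : (Finset.univ.filter fun i => x.1 i = i ∧ x.2 i = false).card ≤ n := by
        calc _ ≤ (Finset.univ : Finset (Fin n)).card := Finset.card_le_univ _
        _ = n := Finset.card_fin n
      have heq : (Finset.univ.filter fun i => x.1 i = i ∧ x.2 i = false).card = n := by omega
      have huniv : (Finset.univ.filter fun i => x.1 i = i ∧ x.2 i = false) = Finset.univ :=
        Finset.eq_univ_of_card _ (heq.trans (Fintype.card_fin n).symm)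
      have hall : ∀ i : Fin n, x.1 i = i ∧ x.2 i = false := by
        intro i
        have : i ∈ (Finset.univ.filter fun i => x.1 i = i ∧ x.2 i = false) := by
          rw [huniv]; exact Finset.mem_univ i
        simpa using this
      apply Prod.ext
      · apply Equiv.ext; intro i; simpa using (hall i).1
      · funext i; simpa using (hall i).2
    · rintro rfl
      refine ⟨mul_one 1, fun i hi => absurd rfl hi, ?_⟩
      simp [Finset.card_fin]
  haveI : Unique {x : St n // x = ((1 : Perm (Fin n)), fun _ => false)} :=
    ⟨⟨⟨_, rfl⟩⟩, fun y => Subtype.ext y.2⟩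
  rw [AA, Nat.card_congr (Equiv.subtypeEquivRight h), Nat.card_unique]


end SIAux

lemma alphaCount_eq_AA (p q : ℕ) : alphaCount p q = SIAux.AA (p + q) ((p : ℤ) - (q : ℤ)) := rfl

theorem stmt3 :
    (∀ p : ℕ, alphaCount p 0 = 1) ∧ (∀ q : ℕ, alphaCount 0 q = 1) ∧
      ∀ p q : ℕ, 1 ≤ p → 1 ≤ q →
        alphaCount p q =
          alphaCount (p - 1) q + alphaCount p (q - 1) +
            (p + q - 1) * alphaCount (p - 1) (q - 1) := by
  refine ⟨?_, ?_, ?_⟩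
  · intro p
    rw [alphaCount_eq_AA]
    have e1 : p + 0 = p := by omega
    have e2 : (p : ℤ) - (0 : ℕ) = (p : ℤ) := by push_cast; ring
    rw [e1, e2, SIAux.AA_top]
  · intro q
    rw [alphaCount_eq_AA]
    have e1 : 0 + q = q := by omega
    have e2 : ((0 : ℕ) : ℤ) - (q : ℕ) = -(q : ℤ) := by push_cast; ring
    rw [e1, e2, SIAux.AA_bot]
  · intro p q hp hq
    obtain ⟨p', rfl⟩ : ∃ p', p = p' + 1 := ⟨p - 1, by omega⟩
    obtain ⟨q', rfl⟩ : ∃ q', q = q' + 1 := ⟨q - 1, by omega⟩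
    simp only [Nat.add_sub_cancel]
    have h0 : alphaCount (p' + 1) (q' + 1) = SIAux.AA (p' + q' + 2) ((p' : ℤ) - (q' : ℤ)) := by
      rw [alphaCount_eq_AA]
      have en : (p' + 1) + (q' + 1) = p' + q' + 2 := by omega
      have ed : ((p' + 1 : ℕ) : ℤ) - ((q' + 1 : ℕ) : ℤ) = (p' : ℤ) - (q' : ℤ) := by
        push_cast; ring
      rw [en, ed]
    have hA : alphaCount p' (q' + 1) = SIAux.AA (p' + q' + 1) ((p' : ℤ) - (q' : ℤ) - 1) := by
      rw [alphaCount_eq_AA]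
      have en : p' + (q' + 1) = p' + q' + 1 := by omega
      have ed : ((p' : ℕ) : ℤ) - ((q' + 1 : ℕ) : ℤ) = (p' : ℤ) - (q' : ℤ) - 1 := by
        push_cast; ring
      rw [en, ed]
    have hB : alphaCount (p' + 1) q' = SIAux.AA (p' + q' + 1) ((p' : ℤ) - (q' : ℤ) + 1) := by
      rw [alphaCount_eq_AA]
      have en : (p' + 1) + q' = p' + q' + 1 := by omega
      have ed : ((p' + 1 : ℕ) : ℤ) - ((q' : ℕ) : ℤ) = (p' : ℤ) - (q' : ℤ) + 1 := by
        push_cast; ring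
      rw [en, ed]
    have hC : alphaCount p' q' = SIAux.AA (p' + q') ((p' : ℤ) - (q' : ℤ)) := by
      rw [alphaCount_eq_AA]
    have hcoef : p' + 1 + (q' + 1) - 1 = p' + q' + 1 := by omega
    rw [h0, hA, hB, hC, hcoef]
    exact SIAux.AA_rec (p' + q') ((p' : ℤ) - (q' : ℤ))
end

section
/- Let n ≥ 2 and let π be an involution of {1,…,n} with π(n) = i for some i < n. Let π' be the involution of {1,…,n−2} obtained from π by deleting the two-cycle (i, n) and relabeling the remaining n−2 points of {1,…,n} ∖ {i, n} order-preservingly (i.e., π' is the conjugate of the restriction of π to {1,…,n} ∖ {i, n} by the unique order isomorphism onto {1,…,n−2}). Then ℓ(π) = ℓ(π') + 2(n−i) − 1, and consequently 𝕃(π) = 𝕃(π') + (n−i). -/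
/-- The number of inversions `ℓ(π)` of a permutation of `{1,…,n}`:
the number of pairs `i < j` with `π(i) > π(j)`. -/
def invCount {n : ℕ} (π : Equiv.Perm (Fin n)) : ℕ :=
  ((Finset.univ : Finset (Fin n × Fin n)).filter
    fun ij => ij.1 < ij.2 ∧ π ij.2 < π ij.1).card

/-- The number of two-cycles of an involution: half the number of its
non-fixed points. -/
def numTwoCycles {n : ℕ} (π : Equiv.Perm (Fin n)) : ℕ :=
  (Finset.univ.filter fun i => π i ≠ i).card / 2

/-- The length `𝕃(π) = (ℓ(π) + k)/2` of an involution `π` with `k` two-cycles. -/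
def len {n : ℕ} (π : Equiv.Perm (Fin n)) : ℕ :=
  (invCount π + numTwoCycles π) / 2

/-- The order-preserving embedding of `{1,…,n}` into `{1,…,n+2}` whose image is
the complement of `{i, n+2}` (0-indexed: the complement of `{i, last}`). -/
def skipEmb (n : ℕ) (i : Fin (n + 2)) (j : Fin n) : Fin (n + 2) :=
  if (j : ℕ) < (i : ℕ) then ⟨(j : ℕ), by omega⟩ else ⟨(j : ℕ) + 1, by omega⟩

theorem stmt13 (n : ℕ) (π : Equiv.Perm (Fin (n + 2))) (hπ : π * π = 1)
    (i : Fin (n + 2)) (hi : π (Fin.last (n + 1)) = i) (hine : i ≠ Fin.last (n + 1))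
    (π' : Equiv.Perm (Fin n))
    (hrel : ∀ j : Fin n, π (skipEmb n i j) = skipEmb n i (π' j)) :
    invCount π = invCount π' + 2 * (n + 1 - (i : ℕ)) - 1 ∧
      len π = len π' + (n + 1 - (i : ℕ)) := by
  classical
  have hπinv : ∀ a, π (π a) = a := fun a => by
    have := congrArg (fun σ : Equiv.Perm (Fin (n+2)) => σ a) hπ
    simpa [Equiv.Perm.mul_apply] using this
  set L : Fin (n + 2) := Fin.last (n + 1) with hLdef
  have hiL : π i = L := by rw [← hi, hπinv]
  have hival : (i : ℕ) ≤ n := by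
    have h1 : (i : ℕ) < n + 2 := i.isLt
    have h2 : (i : ℕ) ≠ n + 1 := by
      intro h
      exact hine (Fin.ext (by simp [hLdef, h]))
    omega
  have hLval : (L : ℕ) = n + 1 := rfl
  have hiltL : i < L := by
    rw [Fin.lt_def, hLval]; omega
  -- basic facts about π and L
  have hπL : ∀ a : Fin (n + 2), π a = L ↔ a = i := by
    intro a
    constructor
    · intro h
      have h2 := hπinv a
      rw [h, hi] at h2
      exact h2.symm
    · rintro rfl; exact hiL
  have hπi : ∀ a : Fin (n + 2), π a = i ↔ a = L := by
    intro a
    constructor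
    · intro h
      have h2 := hπinv a
      rw [h, hiL] at h2
      exact h2.symm
    · rintro rfl; exact hi
  have hle : ∀ a : Fin (n + 2), a ≤ L := fun a => Fin.le_last a
  have hltL : ∀ a : Fin (n + 2), a ≠ L → a < L := fun a h =>
    lt_of_le_of_ne (hle a) h
  -- skipEmb facts
  have hskipval : ∀ j : Fin n,
      ((skipEmb n i j : Fin (n + 2)) : ℕ)
        = if (j : ℕ) < (i : ℕ) then (j : ℕ) else (j : ℕ) + 1 := by
    intro j
    simp only [skipEmb]
    split <;> rfl
  have hskip_lt : ∀ j k : Fin n, skipEmb n i j < skipEmb n i k ↔ j < k := by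
    intro j k
    rw [Fin.lt_def, Fin.lt_def, hskipval, hskipval]
    split_ifs <;> omega
  have hskip_inj : Function.Injective (skipEmb n i) := by
    intro j k h
    have h1 : ¬ skipEmb n i j < skipEmb n i k := by rw [h]; exact lt_irrefl _
    have h2 : ¬ skipEmb n i k < skipEmb n i j := by rw [h]; exact lt_irrefl _
    rw [hskip_lt] at h1
    rw [hskip_lt] at h2
    omega
  have hskip_ne_i : ∀ j : Fin n, skipEmb n i j ≠ i := by
    intro j
    intro h
    rw [Fin.ext_iff, hskipval] at h
    revert h
    split_ifs <;> omega
  have hskip_ne_L : ∀ j : Fin n, skipEmb n i j ≠ L := by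
    intro j
    have hj := j.isLt
    intro h
    rw [Fin.ext_iff, hskipval, hLval] at h
    revert h
    split_ifs <;> omega
  have hsurj : ∀ c : Fin (n + 2), c ≠ i → c ≠ L → ∃ j : Fin n, skipEmb n i j = c := by
    intro c hci hcL
    have hc1 : (c : ℕ) < n + 2 := c.isLt
    have hc2 : (c : ℕ) ≠ (i : ℕ) := fun h => hci (Fin.ext h)
    have hc3 : (c : ℕ) ≠ n + 1 := fun h => hcL (Fin.ext (by simp [hLval, h]))
    by_cases h : (c : ℕ) < (i : ℕ)
    · refine ⟨⟨(c : ℕ), by omega⟩, Fin.ext ?_⟩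
      rw [hskipval]
      simp only [Fin.val_mk]
      rw [if_pos h]
    · refine ⟨⟨(c : ℕ) - 1, by omega⟩, Fin.ext ?_⟩
      rw [hskipval]
      simp only [Fin.val_mk]
      rw [if_neg (by omega)]
      omega
  -- the main inversion count
  set s0 : Finset (Fin (n + 2) × Fin (n + 2)) :=
    Finset.univ.filter (fun p => p.1 < p.2 ∧ π p.2 < π p.1) with hs0
  have hIoo : (Finset.Ioo i L).card = n - (i : ℕ) := by
    rw [Fin.card_Ioo, hLval]; omega
  -- part 1a : pairs (i, L)
  have c11 : ((s0.filter (fun p => p.2 = L)).filter (fun p => p.1 = i)) = {(i, L)} := by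
    ext p
    simp only [hs0, Finset.mem_filter, Finset.mem_univ, true_and, Finset.mem_singleton]
    constructor
    · rintro ⟨⟨_, h2⟩, h1⟩
      exact Prod.ext h1 h2
    · rintro rfl
      exact ⟨⟨⟨hiltL, by rw [hi, hiL]; exact hiltL⟩, rfl⟩, rfl⟩
  -- part 1b : pairs (a, L), a ≠ i
  have c12 : ((s0.filter (fun p => p.2 = L)).filter (fun p => ¬ p.1 = i)).card
      = (Finset.Ioo i L).card := by
    apply Finset.card_bij (fun p _ => π p.1)
    · rintro p hp
      simp only [hs0, Finset.mem_filter, Finset.mem_univ, true_and] at hp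
      obtain ⟨⟨⟨hab, hinv⟩, hbL⟩, hai⟩ := hp
      rw [hbL, hi] at hinv
      refine Finset.mem_Ioo.2 ⟨hinv, hltL _ ?_⟩
      intro h
      exact hai ((hπL p.1).1 h)
    · rintro p hp q hq h
      simp only [hs0, Finset.mem_filter, Finset.mem_univ, true_and] at hp hq
      have h1 : p.1 = q.1 := π.injective h
      have h2 : p.2 = q.2 := by rw [hp.1.2, hq.1.2]
      exact Prod.ext h1 h2
    · intro c hc
      rw [Finset.mem_Ioo] at hc
      obtain ⟨hic, hcL⟩ := hc
      have hcLne : c ≠ L := ne_of_lt hcL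
      have hcine : c ≠ i := ne_of_gt hic
      refine ⟨(π c, L), ?_, hπinv c⟩
      simp only [hs0, Finset.mem_filter, Finset.mem_univ, true_and]
      have hπcL : π c ≠ L := fun h => hcine ((hπL c).1 h)
      have hπci : π c ≠ i := fun h => hcLne ((hπi c).1 h)
      exact ⟨⟨⟨hltL _ hπcL, by rw [hi, hπinv]; exact hic⟩, True.intro⟩, hπci⟩
  -- part 2 empty-ish : pairs with second coordinate = i never inversions... handled implicitly
  -- part 2a : pairs (i, b), b ≠ L
  have c21 : ((s0.filter (fun p => ¬ p.2 = L)).filter (fun p => p.1 = i)).card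
      = (Finset.Ioo i L).card := by
    apply Finset.card_bij (fun p _ => p.2)
    · rintro p hp
      simp only [hs0, Finset.mem_filter, Finset.mem_univ, true_and] at hp
      obtain ⟨⟨⟨hab, hinv⟩, hbL⟩, hai⟩ := hp
      rw [hai] at hab
      exact Finset.mem_Ioo.2 ⟨hab, hltL _ hbL⟩
    · rintro p hp q hq h
      simp only [hs0, Finset.mem_filter, Finset.mem_univ, true_and] at hp hq
      exact Prod.ext (by rw [hp.2, hq.2]) h
    · intro c hc
      rw [Finset.mem_Ioo] at hc
      obtain ⟨hic, hcL⟩ := hc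
      refine ⟨(i, c), ?_, rfl⟩
      simp only [hs0, Finset.mem_filter, Finset.mem_univ, true_and]
      have hπcL : π c ≠ L := fun h => (ne_of_gt hic) ((hπL c).1 h)
      exact ⟨⟨⟨hic, by rw [hiL]; exact hltL _ hπcL⟩, ne_of_lt hcL⟩, True.intro⟩
  -- part 2b : pairs avoiding i and L ↔ inversions of π'
  have c22 : invCount π'
      = ((s0.filter (fun p => ¬ p.2 = L)).filter (fun p => ¬ p.1 = i)).card := by
    unfold invCount
    apply Finset.card_bij (fun q _ => (skipEmb n i q.1, skipEmb n i q.2))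
    · rintro q hq
      simp only [Finset.mem_filter, Finset.mem_univ, true_and] at hq
      obtain ⟨hab, hinv⟩ := hq
      simp only [hs0, Finset.mem_filter, Finset.mem_univ, true_and]
      refine ⟨⟨⟨(hskip_lt _ _).2 hab, ?_⟩, hskip_ne_L _⟩, hskip_ne_i _⟩
      rw [hrel, hrel]
      exact (hskip_lt _ _).2 hinv
    · rintro q hq r hr h
      rw [Prod.ext_iff] at h
      exact Prod.ext (hskip_inj h.1) (hskip_inj h.2)
    · intro p hp
      simp only [hs0, Finset.mem_filter, Finset.mem_univ, true_and] at hp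
      obtain ⟨⟨⟨hab, hinv⟩, hbL⟩, hai⟩ := hp
      have haL : p.1 ≠ L := ne_of_lt (lt_of_lt_of_le hab (hle p.2))
      have hbi : p.2 ≠ i := by
        intro h
        rw [h, hiL] at hinv
        exact absurd (lt_of_le_of_lt (hle (π p.1)) hinv) (lt_irrefl _)
      obtain ⟨j, hj⟩ := hsurj p.1 hai haL
      obtain ⟨k, hk⟩ := hsurj p.2 hbi hbL
      refine ⟨(j, k), ?_, Prod.ext hj hk⟩
      simp only [Finset.mem_filter, Finset.mem_univ, true_and]
      constructor
      · rw [← hskip_lt, hj, hk]; exact hab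
      · rw [← hskip_lt, ← hrel, ← hrel, hj, hk]; exact hinv
  -- assemble the inversion count
  have hsum1 : ((s0.filter (fun p => p.2 = L)).filter (fun p => p.1 = i)).card
      + ((s0.filter (fun p => p.2 = L)).filter (fun p => ¬ p.1 = i)).card
      = (s0.filter (fun p => p.2 = L)).card :=
    Finset.card_filter_add_card_filter_not _
  have hsum2 : ((s0.filter (fun p => ¬ p.2 = L)).filter (fun p => p.1 = i)).card
      + ((s0.filter (fun p => ¬ p.2 = L)).filter (fun p => ¬ p.1 = i)).card
      = (s0.filter (fun p => ¬ p.2 = L)).card :=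
    Finset.card_filter_add_card_filter_not _
  have hsum0 : (s0.filter (fun p => p.2 = L)).card
      + (s0.filter (fun p => ¬ p.2 = L)).card = s0.card :=
    Finset.card_filter_add_card_filter_not _
  have hinvπ : invCount π = s0.card := rfl
  have hc11card : ((s0.filter (fun p => p.2 = L)).filter (fun p => p.1 = i)).card = 1 := by
    rw [c11]; rfl
  have hkey : invCount π = invCount π' + 2 * (n + 1 - (i : ℕ)) - 1 := by
    rw [hinvπ, ← hsum0, ← hsum1, ← hsum2, hc11card, c12, c22, hIoo]
    omega
  -- fixed points
  have hfix : Finset.univ.filter (fun a => π a ≠ a) =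
      insert i (insert L ((Finset.univ.filter (fun j => π' j ≠ j)).image (skipEmb n i))) := by
    ext a
    simp only [Finset.mem_filter, Finset.mem_univ, true_and, Finset.mem_insert,
      Finset.mem_image]
    constructor
    · intro ha
      by_cases h1 : a = i
      · exact Or.inl h1
      by_cases h2 : a = L
      · exact Or.inr (Or.inl h2)
      obtain ⟨j, hj⟩ := hsurj a h1 h2
      refine Or.inr (Or.inr ⟨j, ⟨?_, hj⟩⟩)
      intro hfj
      apply ha
      rw [← hj, hrel, hfj]
    · rintro (rfl | rfl | ⟨j, hj1, rfl⟩)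
      · rw [hiL]; exact fun h => hine h.symm
      · rw [hi]; exact hine
      · rw [hrel]; exact fun h => hj1 (hskip_inj h)
  have hnot1 : L ∉ (Finset.univ.filter (fun j => π' j ≠ j)).image (skipEmb n i) := by
    simp only [Finset.mem_image]
    rintro ⟨j, _, hj⟩
    exact hskip_ne_L j hj
  have hnot2 : i ∉ insert L ((Finset.univ.filter (fun j => π' j ≠ j)).image (skipEmb n i)) := by
    simp only [Finset.mem_insert, Finset.mem_image]
    rintro (h | ⟨j, _, hj⟩)
    · exact hine h
    · exact hskip_ne_i j hj
  have hcard2 : (Finset.univ.filter (fun a => π a ≠ a)).card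
      = (Finset.univ.filter (fun j => π' j ≠ j)).card + 2 := by
    rw [hfix, Finset.card_insert_of_notMem hnot2, Finset.card_insert_of_notMem hnot1,
      Finset.card_image_of_injective _ hskip_inj]
  have hnum : numTwoCycles π = numTwoCycles π' + 1 := by
    unfold numTwoCycles
    omega
  refine ⟨hkey, ?_⟩
  unfold len
  rw [hkey, hnum]
  omega
end
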